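/- arXiv:2208.03504 — 5 statements merged into one kernel-verified Lean document; each statement's English description precedes it below -/
import Mathlib

section
/- Let n ≥ 2 be an integer and let λ₁, …, λₙ be positive real numbers. Suppose α and β are positive real numbers such that 0 ≥ 1 − α·∑_{i=1}^{n} (1/λᵢ) + β·∑_{i=1}^{n} (1/λᵢ²) and 4/n ≤ α²/β < 4/(n−1). Then nα² − 4β ≥ 0, α − √(nα² − 4β) > 0, and λᵢ ≤ 2β/(α − √(nα² − 4β)) for every i ∈ {1, …, n}. -/
/-- Proposition 2.1 (Y. Li): an elementary eigenvalue bound for sequences of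
positive numbers. -/
theorem stmt_0 (n : ℕ) (hn : 2 ≤ n) (lam : Fin n → ℝ) (hlam : ∀ i, 0 < lam i)
    (α β : ℝ) (hα : 0 < α) (hβ : 0 < β)
    (hineq : 0 ≥ 1 - α * ∑ i, (1 / lam i) + β * ∑ i, (1 / (lam i) ^ 2))
    (hlow : 4 / (n : ℝ) ≤ α ^ 2 / β) (hhigh : α ^ 2 / β < 4 / ((n : ℝ) - 1)) :
    (n : ℝ) * α ^ 2 - 4 * β ≥ 0 ∧
      α - Real.sqrt ((n : ℝ) * α ^ 2 - 4 * β) > 0 ∧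
      ∀ i, lam i ≤ 2 * β / (α - Real.sqrt ((n : ℝ) * α ^ 2 - 4 * β)) := by
  have hn' : (2 : ℝ) ≤ (n : ℝ) := by exact_mod_cast hn
  have hn0 : (0 : ℝ) < (n : ℝ) := by linarith
  have hn1 : (0 : ℝ) < (n : ℝ) - 1 := by linarith
  rw [div_le_div_iff₀ hn0 hβ] at hlow
  rw [div_lt_div_iff₀ hβ hn1] at hhigh
  have hD : (n : ℝ) * α ^ 2 - 4 * β ≥ 0 := by nlinarith
  have hDlt : (n : ℝ) * α ^ 2 - 4 * β < α ^ 2 := by nlinarith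
  have hsqrt : Real.sqrt ((n : ℝ) * α ^ 2 - 4 * β) < α :=
    (Real.sqrt_lt' hα).mpr hDlt
  have hpos : 0 < α - Real.sqrt ((n : ℝ) * α ^ 2 - 4 * β) := by linarith
  refine ⟨hD, hpos, fun i => ?_⟩
  set x : Fin n → ℝ := fun j => 1 / lam j with hxdef
  have hxpos : ∀ j, 0 < x j := fun j => div_pos one_pos (hlam j)
  set s : ℝ := ∑ j ∈ Finset.univ.erase i, x j with hs
  set q : ℝ := ∑ j ∈ Finset.univ.erase i, (x j) ^ 2 with hq
  have hsum1 : ∑ j, 1 / lam j = x i + s := by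
    rw [hs, Finset.add_sum_erase _ _ (Finset.mem_univ i)]
  have hsum2 : ∑ j, 1 / (lam j) ^ 2 = (x i) ^ 2 + q := by
    rw [hq, Finset.add_sum_erase _ (fun j => (x j) ^ 2) (Finset.mem_univ i)]
    exact Finset.sum_congr rfl fun j _ => by rw [hxdef]; rw [div_pow, one_pow]
  rw [hsum1, hsum2] at hineq
  have hcard : ((Finset.univ.erase i).card : ℝ) = (n : ℝ) - 1 := by
    rw [Finset.card_erase_of_mem (Finset.mem_univ i), Finset.card_univ,
      Fintype.card_fin]
    have : 1 ≤ n := by omega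
    push_cast [Nat.cast_sub this]
    ring
  have hCS : s ^ 2 ≤ ((n : ℝ) - 1) * q := by
    have := sq_sum_le_card_mul_sum_sq (s := Finset.univ.erase i) (f := x)
    rw [hcard] at this
    exact this
  have hA : 1 - α * (x i + s) + β * ((x i) ^ 2 + q) ≤ 0 := hineq
  have hA' : ((n : ℝ) - 1) * (1 - α * (x i + s) + β * ((x i) ^ 2 + q)) ≤ 0 :=
    mul_nonpos_of_nonneg_of_nonpos hn1.le hA
  have hA'' : β * (((n : ℝ) - 1) * (1 - α * (x i + s) + β * ((x i) ^ 2 + q))) ≤ 0 :=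
    mul_nonpos_of_nonneg_of_nonpos hβ.le hA'
  have hB : β * s ^ 2 ≤ β * (((n : ℝ) - 1) * q) :=
    mul_le_mul_of_nonneg_left hCS hβ.le
  have hsq : (α - 2 * β * x i) ^ 2 ≤ (n : ℝ) * α ^ 2 - 4 * β := by
    nlinarith [hA'', hB, sq_nonneg (2 * β * s - α * ((n : ℝ) - 1)), hn1,
      mul_pos hβ hn1]
  have hle : α - 2 * β * x i ≤ Real.sqrt ((n : ℝ) * α ^ 2 - 4 * β) := by
    calc α - 2 * β * x i ≤ |α - 2 * β * x i| := le_abs_self _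
      _ = Real.sqrt ((α - 2 * β * x i) ^ 2) := (Real.sqrt_sq_eq_abs _).symm
      _ ≤ Real.sqrt ((n : ℝ) * α ^ 2 - 4 * β) := Real.sqrt_le_sqrt hsq
  have hmain : α - Real.sqrt ((n : ℝ) * α ^ 2 - 4 * β) ≤ 2 * β * x i := by
    linarith
  rw [le_div_iff₀ hpos]
  have h2 : lam i * (α - Real.sqrt ((n : ℝ) * α ^ 2 - 4 * β))
      ≤ lam i * (2 * β * x i) := mul_le_mul_of_nonneg_left hmain (hlam i).le
  have h0 : lam i ≠ 0 := (hlam i).ne'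
  have h3 : lam i * (2 * β * x i) = 2 * β := by
    rw [hxdef]
    field_simp
  linarith [h2, h3.le, h3.ge]
end

section
/- Let n ≥ 1 and let G be a positive definite Hermitian n×n complex matrix. Then the function Φ_G(A) := −log(Re tr(A⁻¹ G)) is concave on the convex set of positive definite Hermitian n×n complex matrices: for all positive definite Hermitian matrices A and B and every t ∈ [0,1], the matrix t•A + (1−t)•B is positive definite Hermitian and Φ_G(t•A + (1−t)•B) ≥ t·Φ_G(A) + (1−t)·Φ_G(B). -/
open Matrix
open scoped ComplexOrder

/-- `Φ_G(A) = -log(Re tr(A⁻¹ G))`. -/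
noncomputable def PhiG {n : ℕ} (G A : Matrix (Fin n) (Fin n) ℂ) : ℝ :=
  -Real.log ((A⁻¹ * G).trace.re)

/-!
Write `f(A) = Re tr(A⁻¹G)`, `C = sA + tB` and `D = C⁻¹`. Expanding `tr(DG) = tr(DCDG)` gives
`f(C) = s·Re tr(DADG) + t·Re tr(DBDG)`, while Cauchy–Schwarz for the inner product
`⟪X, Y⟫ = tr(Y A Xᴴ)` gives `f(C)² ≤ Re tr(DADG) · f(A)`, and likewise for `B`. Together they
say that `1 / f` is concave, and then so is `log (1 / f) = Φ_G`, `log` being concave and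
increasing.
-/

theorem ConcaveOn.log {E : Type*} [AddCommMonoid E] [Module ℝ E] {s : Set E} {f : E → ℝ}
    (hf : ConcaveOn ℝ s f) (hpos : ∀ x ∈ s, 0 < f x) :
    ConcaveOn ℝ s fun x => Real.log (f x) := by
  refine ⟨hf.1, fun x hx y hy a b ha hb hab => ?_⟩
  calc a • Real.log (f x) + b • Real.log (f y) ≤ Real.log (a • f x + b • f y) :=
        strictConcaveOn_log_Ioi.concaveOn.2 (hpos x hx) (hpos y hy) ha hb hab
    _ ≤ Real.log (f (a • x + b • y)) :=
        Real.log_le_log (convex_Ioi (0 : ℝ) (hpos x hx) (hpos y hy) ha hb hab)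
          (hf.2 hx hy ha hb hab)

namespace Matrix

open RCLike
open scoped MatrixOrder

variable {𝕜 n : Type*} [RCLike 𝕜]

theorem convex_setOf_posDef : Convex ℝ {A : Matrix n n 𝕜 | A.PosDef} := by
  intro A hA B hB s t hs ht hst
  rcases hs.eq_or_lt with rfl | hs
  · rw [zero_add] at hst
    simpa [hst] using hB
  · exact (hA.smul hs).add_posSemidef (hB.posSemidef.smul ht)

variable [Fintype n]

theorem sq_re_trace_mul_mul_conjTranspose_le {M : Matrix n n 𝕜} (hM : M.PosSemidef)
    (X Y : Matrix n n 𝕜) :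
    re (Y * M * Xᴴ).trace ^ 2 ≤ re (X * M * Xᴴ).trace * re (Y * M * Yᴴ).trace := by
  let := M.toMatrixSeminormedAddCommGroup hM
  let := M.toMatrixInnerProductSpace hM
  calc re (Y * M * Xᴴ).trace ^ 2 = re (inner 𝕜 X Y) ^ 2 := rfl
    _ ≤ ‖inner 𝕜 X Y‖ * ‖inner 𝕜 Y X‖ := by
      rw [norm_inner_symm Y X, ← sq, sq_le_sq, abs_norm]
      exact abs_re_le_norm (inner 𝕜 X Y)
    _ ≤ _ := inner_mul_inner_self_le X Y

variable [DecidableEq n]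

theorem re_trace_inv_mul_pos [Nonempty n] {A G : Matrix n n 𝕜} (hA : A.PosDef)
    (hG : G.PosDef) : 0 < re (A⁻¹ * G).trace := by
  obtain ⟨R, hR, hAR⟩ :=
    CStarAlgebra.isStrictlyPositive_iff_eq_star_mul_self.mp hA.inv.isStrictlyPositive
  have hRGR : (R * G * Rᴴ).PosDef :=
    hG.mul_mul_conjTranspose_same (vecMul_injective_iff_isUnit.2 hR)
  rw [hAR, star_eq_conjTranspose, Matrix.mul_assoc, trace_mul_comm]
  exact (RCLike.pos_iff.1 hRGR.trace_pos).1

theorem sq_re_trace_mul_le {A G : Matrix n n 𝕜} (hA : A.PosDef) (hG : G.PosSemidef)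
    (D : Matrix n n 𝕜) :
    re (D * G).trace ^ 2 ≤ re (D * A * Dᴴ * G).trace * re (A⁻¹ * G).trace := by
  obtain ⟨W, rfl⟩ := CStarAlgebra.nonneg_iff_eq_star_mul_self.mp hG.nonneg
  have hAinv : (A⁻¹)ᴴ = A⁻¹ := hA.inv.isHermitian.eq
  have hdet : IsUnit A.det := (isUnit_iff_isUnit_det A).1 hA.isUnit
  have hcycle (X : Matrix n n 𝕜) : (X * (Wᴴ * W)).trace = (W * X * Wᴴ).trace := by
    rw [← Matrix.mul_assoc, trace_mul_cycle]
  have cs := sq_re_trace_mul_mul_conjTranspose_le hA.posSemidef (W * A⁻¹) (W * D)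
  rw [star_eq_conjTranspose, hcycle, hcycle, hcycle, mul_comm]
  simpa only [conjTranspose_mul, hAinv, Matrix.mul_assoc, mul_nonsing_inv_cancel_left _ _ hdet,
    nonsing_inv_mul_cancel_left _ _ hdet] using cs

theorem concaveOn_inv_re_trace_inv_mul [Nonempty n] {G : Matrix n n 𝕜} (hG : G.PosDef) :
    ConcaveOn ℝ {A : Matrix n n 𝕜 | A.PosDef} fun A => (re (A⁻¹ * G).trace)⁻¹ := by
  refine ⟨convex_setOf_posDef, fun A hA B hB s t hs ht hst => ?_⟩
  set C := s • A + t • B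
  have hC : C.PosDef := convex_setOf_posDef hA hB hs ht hst
  set D := C⁻¹
  have hD : Dᴴ = D := hC.inv.isHermitian.eq
  have hDC : D * C = 1 := nonsing_inv_mul C ((isUnit_iff_isUnit_det C).1 hC.isUnit)
  have hsplit : D * G = s • (D * A * Dᴴ * G) + t • (D * B * Dᴴ * G) := by
    calc D * G = D * C * D * G := by rw [hDC, Matrix.one_mul]
      _ = _ := by
        simp only [C, hD, Matrix.mul_add, Matrix.add_mul, Matrix.mul_smul, Matrix.smul_mul]
  set a := re (A⁻¹ * G).trace
  set b := re (B⁻¹ * G).trace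
  set c := re (D * G).trace
  set u := re (D * A * Dᴴ * G).trace
  set v := re (D * B * Dᴴ * G).trace
  have hc : c = s * u + t * v := by
    simp only [c, hsplit, trace_add, trace_smul, map_add, smul_re]
    rfl
  have ha : 0 < a := re_trace_inv_mul_pos hA hG
  have hb : 0 < b := re_trace_inv_mul_pos hB hG
  have hcpos : 0 < c := re_trace_inv_mul_pos hC hG
  have hu : c ^ 2 / a ≤ u := (div_le_iff₀ ha).2 (sq_re_trace_mul_le hA hG.posSemidef D)
  have hv : c ^ 2 / b ≤ v := (div_le_iff₀ hb).2 (sq_re_trace_mul_le hB hG.posSemidef D)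
  change s * a⁻¹ + t * b⁻¹ ≤ c⁻¹
  calc s * a⁻¹ + t * b⁻¹ = (s * (c ^ 2 / a) + t * (c ^ 2 / b)) / c ^ 2 := by field_simp
    _ ≤ (s * u + t * v) / c ^ 2 := by gcongr
    _ = c⁻¹ := by rw [← hc]; field_simp

end Matrix

/-- Concavity of `Φ_G(A) = -log(Re tr(A⁻¹ G))` on positive definite Hermitian
matrices (the matrix content of inequality (3.10) of the paper). -/
theorem stmt_1 (n : ℕ) (hn : 1 ≤ n) (G : Matrix (Fin n) (Fin n) ℂ) (hG : G.PosDef)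
    (A B : Matrix (Fin n) (Fin n) ℂ) (hA : A.PosDef) (hB : B.PosDef)
    (t : ℝ) (ht : t ∈ Set.Icc (0 : ℝ) 1) :
    (t • A + (1 - t) • B).PosDef ∧
      t * PhiG G A + (1 - t) * PhiG G B ≤ PhiG G (t • A + (1 - t) • B) := by
  have : Nonempty (Fin n) := ⟨⟨0, hn⟩⟩
  have hconc := (concaveOn_inv_re_trace_inv_mul hG).log fun A hA =>
    inv_pos.2 (re_trace_inv_mul_pos hA hG)
  refine ⟨convex_setOf_posDef hA hB ht.1 (sub_nonneg.2 ht.2) (add_sub_cancel t 1), ?_⟩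
  simpa only [PhiG, Real.log_inv, smul_eq_mul, RCLike.re_to_complex] using
    hconc.2 hA hB ht.1 (sub_nonneg.2 ht.2) (add_sub_cancel t 1)
end

section
/- Let n ≥ 1 and let G be a positive definite Hermitian n×n complex matrix. For all positive definite Hermitian n×n complex matrices A and B, one has Φ_G(A) − Φ_G(B) ≤ Re tr(B⁻¹ G B⁻¹ (A − B)) / Re tr(B⁻¹ G), where Φ_G(A) := −log(Re tr(A⁻¹ G)). -/
/-!
With `G = Rᴴ R`, the traces `b = tr(B⁻¹G)`, `a = tr(A⁻¹G)` and `c = tr(B⁻¹GB⁻¹A)` are the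
values `⟪x, y⟫`, `⟪y, y⟫` and `⟪x, x⟫` of the inner product `⟪x, y⟫ = tr(y A xᴴ)` at
`x = R B⁻¹`, `y = R A⁻¹`. Cauchy–Schwarz gives `b² ≤ a c`, hence
`log b - log a = log (b / a) ≤ b / a - 1 ≤ c / b - 1`, which is the claim.
-/

open Matrix
open scoped ComplexOrder MatrixOrder

section

variable {n 𝕜 : Type*} [Fintype n] [RCLike 𝕜]

theorem Matrix.PosSemidef.re_trace_mul_mul_conjTranspose_sq_le {M : Matrix n n 𝕜}
    (hM : M.PosSemidef) (x y : Matrix n n 𝕜) :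
    RCLike.re (y * M * xᴴ).trace ^ 2 ≤
      RCLike.re (x * M * xᴴ).trace * RCLike.re (y * M * yᴴ).trace := by
  let := M.toMatrixSeminormedAddCommGroup hM
  let := M.toMatrixInnerProductSpace hM
  have hcs := inner_mul_inner_self_le (𝕜 := 𝕜) x y
  rw [norm_inner_symm y x, ← sq] at hcs
  change RCLike.re (inner 𝕜 x y : 𝕜) ^ 2 ≤
    RCLike.re (inner 𝕜 x x : 𝕜) * RCLike.re (inner 𝕜 y y : 𝕜)
  calc RCLike.re (inner 𝕜 x y : 𝕜) ^ 2 = |RCLike.re (inner 𝕜 x y : 𝕜)| ^ 2 := (sq_abs _).symm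
    _ ≤ ‖(inner 𝕜 x y : 𝕜)‖ ^ 2 := by gcongr; exact RCLike.abs_re_le_norm _
    _ ≤ _ := hcs

variable [DecidableEq n]

theorem Matrix.PosDef.re_trace_mul_pos [Nonempty n] {P Q : Matrix n n 𝕜}
    (hP : P.PosDef) (hQ : Q.PosDef) : 0 < RCLike.re (P * Q).trace := by
  obtain ⟨R, hR, rfl⟩ :=
    CStarAlgebra.isStrictlyPositive_iff_eq_star_mul_self.mp hQ.isStrictlyPositive
  rw [star_eq_conjTranspose, ← Matrix.mul_assoc, trace_mul_cycle]
  exact (RCLike.pos_iff.mp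
    (hP.mul_mul_conjTranspose_same (vecMul_injective_of_isUnit hR)).trace_pos).1

theorem Matrix.re_trace_inv_mul_sq_le {A B G : Matrix n n 𝕜}
    (hA : A.PosDef) (hB : B.IsHermitian) (hG : G.PosSemidef) :
    RCLike.re (B⁻¹ * G).trace ^ 2 ≤
      RCLike.re (B⁻¹ * G * B⁻¹ * A).trace * RCLike.re (A⁻¹ * G).trace := by
  rw [Matrix.mul_assoc (B⁻¹ * G), trace_mul_comm (B⁻¹ * G)]
  obtain ⟨R, rfl⟩ := CStarAlgebra.nonneg_iff_eq_star_mul_self.mp hG.nonneg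
  have hcs := hA.posSemidef.re_trace_mul_mul_conjTranspose_sq_le (R * B⁻¹) (R * A⁻¹)
  simp only [conjTranspose_mul, hB.inv.eq, hA.isHermitian.inv.eq, Matrix.mul_assoc,
    nonsing_inv_mul_cancel_left A _ ((isUnit_iff_isUnit_det A).mp hA.isUnit)] at hcs
  rw [trace_mul_comm R, trace_mul_comm R, trace_mul_comm R] at hcs
  simpa only [star_eq_conjTranspose, Matrix.mul_assoc] using hcs

end

theorem Real.log_sub_log_le_of_sq_le_mul {a b c : ℝ} (ha : 0 < a) (hb : 0 < b)
    (h : b ^ 2 ≤ c * a) : Real.log b - Real.log a ≤ (c - b) / b :=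
  calc Real.log b - Real.log a = Real.log (b / a) := (Real.log_div hb.ne' ha.ne').symm
    _ ≤ b / a - 1 := Real.log_le_sub_one_of_pos (div_pos hb ha)
    _ ≤ c / b - 1 := sub_le_sub_right ((div_le_div_iff₀ ha hb).mpr (by nlinarith)) 1
    _ = (c - b) / b := by field_simp

/-- The first-order (tangent-plane) inequality (3.11) of the paper: the
concave function `Φ_G` lies below its linearization. -/
theorem stmt_2 (n : ℕ) (hn : 1 ≤ n) (G A B : Matrix (Fin n) (Fin n) ℂ)
    (hG : G.PosDef) (hA : A.PosDef) (hB : B.PosDef) :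
    PhiG G A - PhiG G B ≤
      (B⁻¹ * G * B⁻¹ * (A - B)).trace.re / (B⁻¹ * G).trace.re := by
  have : Nonempty (Fin n) := ⟨⟨0, hn⟩⟩
  have hsplit : B⁻¹ * G * B⁻¹ * (A - B) = B⁻¹ * G * B⁻¹ * A - B⁻¹ * G := by
    rw [Matrix.mul_sub, Matrix.mul_assoc _ B⁻¹ B,
      nonsing_inv_mul B ((isUnit_iff_isUnit_det B).mp hB.isUnit), Matrix.mul_one]
  rw [PhiG, PhiG, hsplit, trace_sub, Complex.sub_re, neg_sub_neg]
  exact Real.log_sub_log_le_of_sq_le_mul (hA.inv.re_trace_mul_pos hG)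
    (hB.inv.re_trace_mul_pos hG) (re_trace_inv_mul_sq_le hA hB.isHermitian hG.posSemidef)
end

section
/- Let n ≥ 1 and let K be a compact set of positive definite Hermitian n×n complex matrices. Then there exist a positive integer N, unit vectors γ₁, …, γ_N ∈ ℂⁿ whose collection contains an orthonormal basis of ℂⁿ, a constant C ≥ 1, and real-valued functions β₁, …, β_N on K satisfying 1/C ≤ β_ν(A) ≤ C for all A ∈ K and all ν ∈ {1, …, N}, such that A = ∑_{ν=1}^{N} β_ν(A) · γ_ν γ_νᴴ for every A ∈ K, where γ γᴴ denotes the rank-one n×n matrix whose (i,j) entry is γ_i · conj(γ_j). -/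
/-!
A positive definite `c` is `∑ₖ λₖ uₖ uₖᴴ` over its eigenbasis with all `λₖ > 0`. Fix a finite frame
of eigenvectors of Hermitian matrices whose rank-one projections span the Hermitian matrices; being
a union of orthonormal bases, it represents `1` with positive coefficients. Near a centre `c`, write
`A = (c - r • 1) + (r • 1 + (A - c))`: the first term has positive eigen-coefficients for small
`r > 0`, and the frame represents the second with positive coefficients as long as `A - c` is small.
Compactness yields finitely many centres; the eigenvectors of the other centres receive a small
weight `ρ`, paid for by the frame. A second compactness argument, moving the coefficients
continuously along a linear section, makes the bounds uniform.
-/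

open Matrix Set Filter Topology
open scoped ComplexOrder

theorem LinearMap.exists_apply_eq_of_mem_range {K V W : Type*} [DivisionRing K] [AddCommGroup V]
    [Module K V] [AddCommGroup W] [Module K W] (f : V →ₗ[K] W) :
    ∃ s : W →ₗ[K] V, ∀ x ∈ range f, f (s x) = x := by
  obtain ⟨g, hg⟩ := f.rangeRestrict.exists_rightInverse_of_surjective f.range_rangeRestrict
  obtain ⟨p, hp⟩ := (range f).subtype.exists_leftInverse_of_injective (range f).ker_subtype
  refine ⟨g ∘ₗ p, fun x hx => ?_⟩
  have hpx : p x = ⟨x, hx⟩ := LinearMap.congr_fun hp ⟨x, hx⟩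
  simpa [hpx] using congrArg Subtype.val (LinearMap.congr_fun hg ⟨x, hx⟩)

theorem exists_pos_forall_lt {ι : Type*} [Finite ι] {f : ι → ℝ} (hf : ∀ i, 0 < f i) :
    ∃ r > 0, ∀ i, r < f i :=
  (((eventually_all.2 fun i => eventually_lt_nhds (hf i)).filter_mono nhdsWithin_le_nhds).and
    (self_mem_nhdsWithin : Ioi 0 ∈ 𝓝[>] (0 : ℝ))).exists.imp fun _ h => ⟨h.2, h.1⟩

theorem IsCompact.exists_pinched_coeffs {ι E : Type*} [Fintype ι] [AddCommGroup E] [Module ℝ E]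
    [TopologicalSpace E] [IsTopologicalAddGroup E] [ContinuousSMul ℝ E] [T2Space E]
    [FiniteDimensional ℝ E] {K : Set E} (hK : IsCompact K) (L : (ι → ℝ) →ₗ[ℝ] E)
    (hpos : ∀ A ∈ K, ∃ w, (∀ ν, 0 < w ν) ∧ L w = A) :
    ∃ C : ℝ, 1 ≤ C ∧ ∀ A ∈ K, ∃ w, (∀ ν, 1 / C ≤ w ν ∧ w ν ≤ C) ∧ L w = A := by
  obtain ⟨s, hs⟩ := L.exists_apply_eq_of_mem_range
  let box : ℕ → Set (ι → ℝ) := fun k => univ.pi fun _ => Ioo (1 / ((k : ℝ) + 1)) (k + 1)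
  -- `w + s (A - L w)` represents every `A ∈ range L` and depends continuously on `A`
  let V : ℕ → Set E := fun k => ⋃ w ∈ box k, (fun A => w + s (A - L w)) ⁻¹' box k
  have hbox_open : ∀ k, IsOpen (box k) := fun k => isOpen_set_pi finite_univ fun _ _ => isOpen_Ioo
  have hbox_mono : Monotone box := fun k l hkl => pi_mono fun _ _ =>
    Ioo_subset_Ioo (one_div_le_one_div_of_le (by positivity) (by gcongr)) (by gcongr)
  have hV_open : ∀ k, IsOpen (V k) := fun k => isOpen_biUnion fun w _ => (hbox_open k).preimage
    (continuous_const.add (s.continuous_of_finiteDimensional.comp (continuous_sub_right _)))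
  have hV_mono : Monotone V := fun k l hkl => biUnion_mono (hbox_mono hkl) fun w _ =>
    preimage_mono (hbox_mono hkl)
  have hK_V : K ⊆ ⋃ k, V k := by
    intro A hA
    obtain ⟨w, hw, rfl⟩ := hpos A hA
    have hbox : ∀ᶠ k : ℕ in atTop, w ∈ box k := by
      simp only [box, Set.mem_pi, mem_univ, mem_Ioo, forall_const, eventually_all]
      refine fun ν => (tendsto_one_div_add_atTop_nhds_zero_nat.eventually (gt_mem_nhds (hw ν))).and
        ((tendsto_natCast_atTop_atTop.eventually_gt_atTop (w ν)).mono fun k hk => ?_)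
      linarith
    obtain ⟨k, hk⟩ := hbox.exists
    exact mem_iUnion.2 ⟨k, mem_biUnion hk (by simpa using hk)⟩
  obtain ⟨k, hk⟩ := hK.elim_directed_cover V hV_open hK_V hV_mono.directed_le
  refine ⟨k + 1, by linarith [(k.cast_nonneg : (0 : ℝ) ≤ k)], fun A hA => ?_⟩
  obtain ⟨w, -, hAw⟩ := mem_iUnion₂.1 (hk hA)
  refine ⟨w + s (A - L w), fun ν => ?_, ?_⟩
  · exact ⟨(hAw ν trivial).1.le, (hAw ν trivial).2.le⟩
  · obtain ⟨w', -, rfl⟩ := hpos A hA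
    rw [map_add, hs _ (sub_mem (LinearMap.mem_range_self L w') (LinearMap.mem_range_self L w))]
    abel

variable {𝕜 m ι β : Type*} [RCLike 𝕜]

noncomputable def rankOneComb [Fintype ι] (γ : ι → EuclideanSpace 𝕜 m) :
    (ι → ℝ) →ₗ[ℝ] Matrix m m 𝕜 :=
  Fintype.linearCombination ℝ fun ν => vecMulVec ⇑(γ ν) (star ⇑(γ ν))

theorem rankOneComb_apply [Fintype ι] (γ : ι → EuclideanSpace 𝕜 m) (w : ι → ℝ) :
    rankOneComb γ w = ∑ ν, w ν • vecMulVec ⇑(γ ν) (star ⇑(γ ν)) :=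
  Fintype.linearCombination_apply ℝ _ w

theorem rankOneComb_sumElim [Fintype ι] {ι' : Type*} [Fintype ι'] (γ : ι → EuclideanSpace 𝕜 m)
    (γ' : ι' → EuclideanSpace 𝕜 m) (w : ι → ℝ) (w' : ι' → ℝ) :
    rankOneComb (Sum.elim γ γ') (Sum.elim w w') = rankOneComb γ w + rankOneComb γ' w' := by
  simp only [rankOneComb_apply, Fintype.sum_sum_type, Sum.elim_inl, Sum.elim_inr]

variable [Fintype m] [DecidableEq m]

theorem Matrix.mul_diagonal_mul_conjTranspose {α l : Type*} [CommSemiring α] [StarRing α]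
    (U : Matrix l m α) (d : m → α) :
    U * diagonal d * Uᴴ = ∑ k, d k • vecMulVec (fun i => U i k) (star fun i => U i k) := by
  ext i j
  simp [mul_apply, sum_apply, vecMulVec_apply, diagonal_apply, mul_left_comm, mul_assoc]

theorem Matrix.IsHermitian.sum_eigenvalues_smul_vecMulVec {A : Matrix m m 𝕜} (hA : A.IsHermitian) :
    ∑ k, hA.eigenvalues k • vecMulVec ⇑(hA.eigenvectorBasis k) (star ⇑(hA.eigenvectorBasis k)) =
      A := by
  conv_rhs => rw [hA.spectral_theorem, Unitary.conjStarAlgAut_apply, star_eq_conjTranspose,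
    mul_diagonal_mul_conjTranspose]
  simp only [Function.comp_apply, eigenvectorUnitary_apply, RCLike.real_smul_eq_coe_smul (K := 𝕜)]

theorem Matrix.IsHermitian.sum_vecMulVec_eigenvectorBasis {A : Matrix m m 𝕜} (hA : A.IsHermitian) :
    ∑ k, vecMulVec ⇑(hA.eigenvectorBasis k) (star ⇑(hA.eigenvectorBasis k)) = 1 := by
  have h : (hA.eigenvectorUnitary : Matrix m m 𝕜) * diagonal 1 * (hA.eigenvectorUnitary)ᴴ = 1 := by
    rw [diagonal_one', mul_one, ← star_eq_conjTranspose, ← Unitary.coe_star,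
      Unitary.coe_mul_star_self]
  simpa only [mul_diagonal_mul_conjTranspose, Pi.one_apply, one_smul, eigenvectorUnitary_apply]
    using h

noncomputable def eigenFrame (H : β → Matrix m m 𝕜) (hH : ∀ b, (H b).IsHermitian) (p : β × m) :
    EuclideanSpace 𝕜 m :=
  (hH p.1).eigenvectorBasis p.2

variable (H : β → Matrix m m 𝕜) (hH : ∀ b, (H b).IsHermitian)

@[simp]
theorem eigenFrame_mk (b : β) (k : m) : eigenFrame H hH (b, k) = (hH b).eigenvectorBasis k := rfl

theorem rankOneComb_eigenFrame_const [Fintype β] (a : ℝ) :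
    rankOneComb (eigenFrame H hH) (fun _ => a) = (a * Fintype.card β) • (1 : Matrix m m 𝕜) := by
  simp only [rankOneComb_apply, Fintype.sum_prod_type, eigenFrame_mk, ← Finset.smul_sum]
  simp only [IsHermitian.sum_vecMulVec_eigenvectorBasis, Finset.sum_const, Finset.card_univ,
    ← Nat.cast_smul_eq_nsmul ℝ, smul_smul]

theorem rankOneComb_eigenFrame_ite [Fintype β] [DecidableEq β] (b : β) (f : m → ℝ) :
    rankOneComb (eigenFrame H hH) (fun p => if p.1 = b then f p.2 else 0) =
      ∑ k, f k • vecMulVec ⇑((hH b).eigenvectorBasis k) (star ⇑((hH b).eigenvectorBasis k)) := by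
  rw [rankOneComb_apply, Fintype.sum_prod_type, Fintype.sum_eq_single b fun x hx => by simp [hx]]
  simp

theorem rankOneComb_sumElim_eigenFrame [Fintype β] {β' : Type*} [Fintype β'] [DecidableEq β']
    (H' : β' → Matrix m m 𝕜) (hH' : ∀ b, (H' b).IsHermitian) (b : β') (r ρ : ℝ) (x : β × m → ℝ)
    (hβ : Fintype.card β ≠ 0) :
    rankOneComb (Sum.elim (eigenFrame H hH) (eigenFrame H' hH'))
      (Sum.elim ((fun _ => (r - ρ * Fintype.card β') / Fintype.card β) + x)
        ((fun q => if q.1 = b then (hH' b).eigenvalues q.2 - r else 0) + fun _ => ρ)) =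
      H' b + rankOneComb (eigenFrame H hH) x := by
  rw [rankOneComb_sumElim, map_add, map_add, rankOneComb_eigenFrame_const,
    rankOneComb_eigenFrame_const,
    rankOneComb_eigenFrame_ite _ _ _ fun k => (hH' b).eigenvalues k - r]
  simp only [sub_smul, Finset.sum_sub_distrib, ← Finset.smul_sum]
  rw [(hH' b).sum_eigenvalues_smul_vecMulVec, (hH' b).sum_vecMulVec_eigenvectorBasis,
    div_mul_cancel₀ _ (Nat.cast_ne_zero.2 hβ), sub_smul]
  abel

theorem exists_eigenFrame_mem_range [Nonempty m] :
    ∃ (d : ℕ) (h : Fin d → Matrix m m 𝕜) (hh : ∀ j, (h j).IsHermitian), 0 < d ∧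
      ∀ A : Matrix m m 𝕜, A.IsHermitian → A ∈ LinearMap.range (rankOneComb (eigenFrame h hh)) := by
  let b := Module.finBasis ℝ (selfAdjoint.submodule ℝ (Matrix m m 𝕜))
  have hb : ∀ j, (b j : Matrix m m 𝕜).IsHermitian := fun j =>
    isHermitian_iff_isSelfAdjoint.2 (b j).2
  refine ⟨_, fun j => b j, hb, Module.finrank_pos_iff_exists_ne_zero.2
    ⟨⟨1, isHermitian_iff_isSelfAdjoint.1 isHermitian_one⟩, by simp [← Subtype.coe_ne_coe]⟩, ?_⟩
  suffices ∀ x : selfAdjoint.submodule ℝ (Matrix m m 𝕜),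
      (x : Matrix m m 𝕜) ∈ LinearMap.range (rankOneComb (eigenFrame _ hb)) from
    fun A hA => this ⟨A, isHermitian_iff_isSelfAdjoint.1 hA⟩
  intro x
  rw [← b.sum_repr x, Submodule.coe_sum]
  refine Submodule.sum_mem _ fun j _ => ?_
  rw [Submodule.coe_smul]
  refine Submodule.smul_mem _ _ ⟨fun p => if p.1 = j then (hb j).eigenvalues p.2 else 0, ?_⟩
  rw [rankOneComb_eigenFrame_ite, IsHermitian.sum_eigenvalues_smul_vecMulVec]

theorem exists_finset_forall_pos_rankOneComb [Fintype β] [Nonempty β]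
    (hspan : ∀ A : Matrix m m 𝕜, A.IsHermitian →
      A ∈ LinearMap.range (rankOneComb (eigenFrame H hH)))
    {K : Set (Matrix m m 𝕜)} (hK : IsCompact K) (hKpos : ∀ A ∈ K, A.PosDef) :
    ∃ t : Finset K, ∀ A ∈ K, ∃ w, (∀ ν, 0 < w ν) ∧
      rankOneComb (Sum.elim (eigenFrame H hH)
        (eigenFrame (fun c : t => (c : Matrix m m 𝕜)) fun c => (hKpos _ c.1.2).isHermitian)) w =
        A := by
  classical
  obtain ⟨s, hs⟩ := (rankOneComb (eigenFrame H hH)).exists_apply_eq_of_mem_range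
  choose r hr_pos hr_lt using fun c : K => exists_pos_forall_lt (hKpos c c.2).eigenvalues_pos
  have hd : 0 < (Fintype.card β : ℝ) := Nat.cast_pos.2 Fintype.card_pos
  let U : K → Set (Matrix m m 𝕜) := fun c =>
    (fun A => s (A - c)) ⁻¹' univ.pi fun _ => Ioi (-(r c / (2 * Fintype.card β)))
  have hU_open : ∀ c, IsOpen (U c) := fun c =>
    (isOpen_set_pi finite_univ fun _ _ => isOpen_Ioi).preimage
      (s.continuous_of_finiteDimensional.comp (continuous_sub_right _))
  obtain ⟨t, ht⟩ := hK.elim_finite_subcover U hU_open fun A hA => mem_iUnion.2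
    ⟨⟨A, hA⟩, fun p _ => by simpa using div_pos (hr_pos ⟨A, hA⟩) (mul_pos two_pos hd)⟩
  have ht_pos : ∀ c : t, 0 < (Fintype.card t : ℝ) := fun c =>
    Nat.cast_pos.2 (Fintype.card_pos_iff.2 ⟨c⟩)
  obtain ⟨ρ, hρ, hρr⟩ := exists_pos_forall_lt (f := fun c : t => r c / (2 * Fintype.card t))
    fun c => div_pos (hr_pos c) (mul_pos two_pos (ht_pos c))
  refine ⟨t, fun A hA => ?_⟩
  obtain ⟨c, hct, hAc⟩ := mem_iUnion₂.1 (ht hA)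
  refine ⟨_, Sum.forall.2 ⟨fun p => ?_, fun q => ?_⟩, (rankOneComb_sumElim_eigenFrame H hH _ _
    ⟨c, hct⟩ (r c) ρ (s (A - c)) Fintype.card_ne_zero).trans ?_⟩
  · have hρt : ρ * (2 * Fintype.card t) < r c :=
      (lt_div_iff₀ (mul_pos two_pos (ht_pos ⟨c, hct⟩))).1 (hρr ⟨c, hct⟩)
    have hmargin : r c / (2 * Fintype.card β) < (r c - ρ * Fintype.card t) / Fintype.card β := by
      rw [div_lt_div_iff₀ (by positivity) hd]
      nlinarith
    have : -(r c / (2 * Fintype.card β)) < s (A - c) p := hAc p trivial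
    simp only [Sum.elim_inl, Pi.add_apply]
    linarith
  · simp only [Sum.elim_inr, Pi.add_apply]
    split_ifs
    · linarith [hr_lt c q.2]
    · linarith
  · rw [hs _ (hspan _ ((hKpos A hA).isHermitian.sub (hKpos c c.2).isHermitian)), add_sub_cancel]

/-- Lemma 4.1 (M. Gill): on a compact set of positive definite Hermitian
matrices, there exist finitely many unit vectors `γ_ν`, containing an
orthonormal basis of `ℂⁿ`, and uniformly pinched coefficient functions `β_ν`
such that every matrix in the set decomposes as `∑ ν β_ν(A) γ_ν γ_νᴴ`. -/
theorem stmt_4 (n : ℕ) (hn : 1 ≤ n) (K : Set (Matrix (Fin n) (Fin n) ℂ))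
    (hK : IsCompact K) (hKpos : ∀ A ∈ K, A.PosDef) :
    ∃ (N : ℕ) (_ : 0 < N) (γ : Fin N → EuclideanSpace ℂ (Fin n)) (C : ℝ)
      (β : Fin N → Matrix (Fin n) (Fin n) ℂ → ℝ),
      (∀ ν, ‖γ ν‖ = 1) ∧
      (∃ b : OrthonormalBasis (Fin n) ℂ (EuclideanSpace ℂ (Fin n)),
        ∀ i, ∃ ν, b i = γ ν) ∧
      1 ≤ C ∧
      (∀ A ∈ K, ∀ ν, 1 / C ≤ β ν A ∧ β ν A ≤ C) ∧
      (∀ A ∈ K,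
        A = ∑ ν, β ν A •
          Matrix.vecMulVec (fun i => γ ν i) (fun j => (starRingEnd ℂ) (γ ν j))) := by
  have : Nonempty (Fin n) := ⟨⟨0, hn⟩⟩
  obtain ⟨d, h, hh, hd, hspan⟩ := exists_eigenFrame_mem_range (𝕜 := ℂ) (m := Fin n)
  have : Nonempty (Fin d) := ⟨⟨0, hd⟩⟩
  obtain ⟨t, hpos⟩ := exists_finset_forall_pos_rankOneComb h hh hspan hK hKpos
  let γ := Sum.elim (eigenFrame h hh)
    (eigenFrame (fun c : t => (c : Matrix (Fin n) (Fin n) ℂ)) fun c => (hKpos _ c.1.2).isHermitian)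
  obtain ⟨C, hC, hrep⟩ := hK.exists_pinched_coeffs (rankOneComb γ) hpos
  choose! w hw_bounds hw_eq using hrep
  have hγ : ∀ x, ‖γ x‖ = 1 := by
    rintro (p | p) <;> exact (OrthonormalBasis.orthonormal _).1 _
  let e := Fintype.equivFin (Fin d × Fin n ⊕ t × Fin n)
  refine ⟨_, Fintype.card_pos, γ ∘ e.symm, C, fun ν A => w A (e.symm ν), fun ν => hγ _,
    ⟨(hh ⟨0, hd⟩).eigenvectorBasis, fun i => ⟨e (Sum.inl (⟨0, hd⟩, i)), ?_⟩⟩, hC,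
    fun A hA ν => hw_bounds A hA _, fun A hA => ?_⟩
  · simp only [Function.comp_apply, Equiv.symm_apply_apply, γ, Sum.elim_inl, eigenFrame_mk]
  · calc A = rankOneComb γ (w A) := (hw_eq A hA).symm
      _ = _ := by rw [rankOneComb_apply, ← e.symm.sum_comp]; rfl
end

section
/- Let n ≥ 1, let A and G be positive definite Hermitian n×n complex matrices, and let X be a Hermitian n×n complex matrix. Then Re tr(A⁻¹·G·A⁻¹·X·A⁻¹·X) ≥ 0 and (Re tr(A⁻¹·G·A⁻¹·X))² ≤ 2 · Re tr(A⁻¹·G) · Re tr(A⁻¹·G·A⁻¹·X·A⁻¹·X). -/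
open Matrix
open scoped ComplexOrder

/-!
Factor `G = Tᴴ T` and write `B = A⁻¹`. By cyclicity of the trace, the three traces are
`⟪T, T⟫`, `⟪T, T B X⟫` and `⟪T B X, T B X⟫` for the semi-inner product `⟪x, y⟫ = tr (y B xᴴ)`
that the positive semidefinite matrix `B` induces on matrices. Hence the last one is nonnegative,
and Cauchy–Schwarz gives the second inequality even without the factor `2`.
-/

namespace Matrix

theorem trace_mul_conjTranspose_mul_self_mul {R n : Type*} [CommRing R] [StarRing R]
    [Fintype n] (B T Y : Matrix n n R) :
    (B * (Tᴴ * T) * Y).trace = (T * Y * B * Tᴴ).trace := by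
  rw [trace_mul_comm _ Tᴴ, ← mul_assoc, ← mul_assoc, trace_mul_comm _ B]
  simp only [mul_assoc]

namespace PosSemidef

variable {𝕜 n : Type*} [RCLike 𝕜] [Fintype n] {M : Matrix n n 𝕜}

open RCLike

open scoped MatrixOrder in
theorem exists_eq_conjTranspose_mul_self [DecidableEq n] (hM : M.PosSemidef) :
    ∃ T : Matrix n n 𝕜, M = Tᴴ * T :=
  CStarAlgebra.nonneg_iff_eq_star_mul_self.mp hM.nonneg

theorem re_trace_mul_mul_conjTranspose_nonneg (hM : M.PosSemidef) (x : Matrix n n 𝕜) :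
    0 ≤ re (x * M * xᴴ).trace :=
  (RCLike.nonneg_iff.mp (hM.mul_mul_conjTranspose_same x).trace_nonneg).1

theorem sq_re_trace_mul_mul_conjTranspose_le (hM : M.PosSemidef) (x y : Matrix n n 𝕜) :
    re (y * M * xᴴ).trace ^ 2 ≤ re (x * M * xᴴ).trace * re (y * M * yᴴ).trace := by
  let := M.toMatrixSeminormedAddCommGroup hM
  let := M.toMatrixInnerProductSpace hM
  have hre : |re (inner 𝕜 x y)| ≤ ‖x‖ * ‖y‖ :=
    (abs_re_le_norm _).trans (norm_inner_le_norm x y)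
  calc re (y * M * xᴴ).trace ^ 2 = |re (inner 𝕜 x y)| ^ 2 := (sq_abs _).symm
    _ ≤ (‖x‖ * ‖y‖) ^ 2 := pow_le_pow_left₀ (abs_nonneg _) hre 2
    _ = re (inner 𝕜 x x) * re (inner 𝕜 y y) := by
      rw [mul_pow, inner_self_eq_norm_sq, inner_self_eq_norm_sq]

end PosSemidef

end Matrix

theorem stmt_8_general (n : ℕ) (A G X : Matrix (Fin n) (Fin n) ℂ)
    (hA : A.PosDef) (hG : G.PosDef) (hX : X.IsHermitian) :
    0 ≤ (A⁻¹ * G * A⁻¹ * X * A⁻¹ * X).trace.re ∧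
      ((A⁻¹ * G * A⁻¹ * X).trace.re) ^ 2 ≤
        2 * (A⁻¹ * G).trace.re * (A⁻¹ * G * A⁻¹ * X * A⁻¹ * X).trace.re := by
  obtain ⟨T, rfl⟩ := hG.posSemidef.exists_eq_conjTranspose_mul_self
  set B := A⁻¹
  have hB : B.PosSemidef := hA.inv.posSemidef
  have h₁ : (B * (Tᴴ * T)).trace = (T * B * Tᴴ).trace := by
    simpa using trace_mul_conjTranspose_mul_self_mul B T 1
  have h₂ : (B * (Tᴴ * T) * B * X).trace = (T * B * X * B * Tᴴ).trace := by
    simpa only [mul_assoc] using trace_mul_conjTranspose_mul_self_mul B T (B * X)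
  have h₃ : (B * (Tᴴ * T) * B * X * B * X).trace = (T * B * X * B * (T * B * X)ᴴ).trace := by
    simpa only [conjTranspose_mul, hB.isHermitian.eq, hX.eq, mul_assoc] using
      trace_mul_conjTranspose_mul_self_mul B T (B * X * B * X)
  rw [h₁, h₂, h₃]
  have ha := hB.re_trace_mul_mul_conjTranspose_nonneg T
  have hc := hB.re_trace_mul_mul_conjTranspose_nonneg (T * B * X)
  have hcs := hB.sq_re_trace_mul_mul_conjTranspose_le T (T * B * X)
  simp only [RCLike.re_to_complex] at ha hc hcs
  exact ⟨hc, by linarith [mul_nonneg ha hc]⟩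

/-- Nonpositivity of the second derivative of `Φ(A) = -log(Re tr(A⁻¹G))` along
Hermitian directions `X` (the content of the Hessian computation (3.10)). -/
theorem stmt_8 (n : ℕ) (hn : 1 ≤ n) (A G X : Matrix (Fin n) (Fin n) ℂ)
    (hA : A.PosDef) (hG : G.PosDef) (hX : X.IsHermitian) :
    0 ≤ (A⁻¹ * G * A⁻¹ * X * A⁻¹ * X).trace.re ∧
      ((A⁻¹ * G * A⁻¹ * X).trace.re) ^ 2 ≤
        2 * (A⁻¹ * G).trace.re * (A⁻¹ * G * A⁻¹ * X * A⁻¹ * X).trace.re :=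
  stmt_8_general n A G X hA hG hX
end
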